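/- For finite samples x_1,…,x_m and y_1,…,y_m and any bounded measurable f, (1/m)∑_i log σ(f(x_i)) + (1/m)∑_j log(1-σ(f(y_j))) ≤ log σ((1/m)∑_i f(x_i) − (1/m)∑_j f(y_j)). -/

import Mathlib

/-!
`1 - σ(t) = σ(-t)`, so the left-hand side is the mean of `log σ` over the points `f (x i)` and
`-f (y j)`. Since `log σ` is concave (its derivative `σ(-t)` is decreasing), Jensen's inequality
bounds each half by `log σ` of the corresponding empirical mean, and `σ u σ v ≤ σ (u + v)`,
i.e. `1 + e^{-u-v} ≤ (1 + e^{-u})(1 + e^{-v})`, merges the two terms.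
-/

open MeasureTheory

noncomputable def logisticSigmoid (x : ℝ) : ℝ := Real.exp x / (1 + Real.exp x)

open Finset Real

theorem ConcaveOn.mean_le_map_mean {ι E : Type*} [AddCommGroup E] [Module ℝ E]
    {s : Set E} {g : E → ℝ} (hg : ConcaveOn ℝ s g) {t : Finset ι} (ht : t.Nonempty)
    {a : ι → E} (ha : ∀ i ∈ t, a i ∈ s) :
    (#t : ℝ)⁻¹ * ∑ i ∈ t, g (a i) ≤ g ((#t : ℝ)⁻¹ • ∑ i ∈ t, a i) := by
  have hcard : (#t : ℝ) ≠ 0 := by exact_mod_cast ht.card_pos.ne'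
  simpa only [smul_eq_mul, ← mul_sum, ← smul_sum] using
    hg.le_map_sum (t := t) (w := fun _ => (#t : ℝ)⁻¹) (fun _ _ => by positivity)
      (by simp [hcard]) ha

namespace Real

theorem hasDerivAt_log_sigmoid (x : ℝ) :
    HasDerivAt (fun x => log (sigmoid x)) (sigmoid (-x)) x := by
  convert (hasDerivAt_sigmoid x).log (sigmoid_pos x).ne' using 1
  rw [sigmoid_neg]
  field_simp [(sigmoid_pos x).ne']

theorem concaveOn_log_sigmoid : ConcaveOn ℝ Set.univ (fun x => log (sigmoid x)) := by
  refine Antitone.concaveOn_univ_of_deriv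
    (fun x => (hasDerivAt_log_sigmoid x).differentiableAt) ?_
  rw [funext fun x => (hasDerivAt_log_sigmoid x).deriv]
  exact sigmoid_monotone.comp_antitone fun _ _ => neg_le_neg

theorem sigmoid_mul_sigmoid_le (u v : ℝ) : sigmoid u * sigmoid v ≤ sigmoid (u + v) := by
  simp only [sigmoid_def, ← mul_inv]
  gcongr
  rw [neg_add, exp_add]
  nlinarith [exp_pos (-u), exp_pos (-v)]

theorem log_sigmoid_add_log_sigmoid_le (u v : ℝ) :
    log (sigmoid u) + log (sigmoid v) ≤ log (sigmoid (u + v)) := by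
  rw [← log_mul (sigmoid_pos u).ne' (sigmoid_pos v).ne']
  exact log_le_log (mul_pos (sigmoid_pos u) (sigmoid_pos v)) (sigmoid_mul_sigmoid_le u v)

end Real

theorem logisticSigmoid_eq_sigmoid : logisticSigmoid = Real.sigmoid := by
  ext x
  rw [logisticSigmoid, sigmoid_def, exp_neg]
  field_simp
  ring

theorem mean_log_sigmoid_le (m : ℕ) (hm : 0 < m) (a : Fin m → ℝ) :
    (1 / (m : ℝ)) * ∑ i, log (sigmoid (a i)) ≤ log (sigmoid ((1 / (m : ℝ)) * ∑ i, a i)) := by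
  have := concaveOn_log_sigmoid.mean_le_map_mean (univ_nonempty_iff.mpr ⟨⟨0, hm⟩⟩)
    (a := a) fun _ _ => Set.mem_univ _
  simpa only [card_univ, Fintype.card_fin, one_div, smul_eq_mul] using this

theorem mean_embedding_upper_bound_finite_general
    {𝒳 : Type*}
    (m : ℕ) (hm : 0 < m) (x y : Fin m → 𝒳)
    (f : 𝒳 → ℝ) :
    (1 / (m : ℝ)) * ∑ i, Real.log (logisticSigmoid (f (x i))) +
      (1 / (m : ℝ)) * ∑ j, Real.log (1 - logisticSigmoid (f (y j))) ≤
    Real.log (logisticSigmoid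
      ((1 / (m : ℝ)) * ∑ i, f (x i) - (1 / (m : ℝ)) * ∑ j, f (y j))) := by
  simp only [logisticSigmoid_eq_sigmoid, ← sigmoid_neg]
  calc _ ≤ log (sigmoid ((1 / (m : ℝ)) * ∑ i, f (x i)))
          + log (sigmoid ((1 / (m : ℝ)) * ∑ j, -f (y j))) :=
        add_le_add (mean_log_sigmoid_le m hm _) (mean_log_sigmoid_le m hm _)
    _ ≤ _ := log_sigmoid_add_log_sigmoid_le _ _
    _ = _ := by rw [sum_neg_distrib, mul_neg, ← sub_eq_add_neg]

theorem mean_embedding_upper_bound_finite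
    {𝒳 : Type*} [MeasurableSpace 𝒳]
    (m : ℕ) (hm : 0 < m) (x y : Fin m → 𝒳)
    (f : 𝒳 → ℝ) (hf : Measurable f) (M : ℝ) (hM : ∀ t, |f t| ≤ M) :
    (1 / (m : ℝ)) * ∑ i, Real.log (logisticSigmoid (f (x i))) +
      (1 / (m : ℝ)) * ∑ j, Real.log (1 - logisticSigmoid (f (y j))) ≤
    Real.log (logisticSigmoid
      ((1 / (m : ℝ)) * ∑ i, f (x i) - (1 / (m : ℝ)) * ∑ j, f (y j))) :=
  mean_embedding_upper_bound_finite_general m hm x y f
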